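/- Let ∼ be an equivalence relation on traces, let C₁, C₂ be channels from finite sets X₁, X₂ to finite trace sets Y₁, Y₂ respectively, let π be a prior on X₁×X₂, let S be a ∼-blind scheduler on Y₁, Y₂, let Obs be a deterministic ∼-observer on Int(Y₁,Y₂) with views the ∼-classes, and let Obs× be the deterministic observer on Y₁×Y₂ mapping each pair (y₁,y₂) to the pair of ∼-classes ([y₁]∼, [y₂]∼). Then the observed mutual information of the scheduled composition is at most that of the parallel composition: I(π, Comp_S(C₁,C₂)·Obs) ≤ I(π, (C₁×C₂)·Obs×). -/

import Mathlib

/-!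
By blindness, the distribution of the `∼`-class of the scheduled trace depends only on the
classes `([y₁], [y₂])` of the component traces, so the observed scheduled composition is the
observed parallel composition followed by a stochastic kernel on pairs of classes. Mutual
information is the prior-weighted relative entropy of each row against the output distribution,
and relative entropy cannot increase under a stochastic kernel: apply the log-sum inequality to
each view.
-/

open scoped Classical BigOperators

noncomputable section

/-- A (row-stochastic) channel matrix whose outputs range over a finite set `Ys`. -/
def FIsChannel {X B : Type*} (Ys : Finset B) (C : X → B → ℝ) : Prop :=
  (∀ x y, 0 ≤ C x y) ∧ ∀ x, ∑ y ∈ Ys, C x y = 1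

/-- A prior (probability distribution). -/
def IsPrior {X : Type*} [Fintype X] (π : X → ℝ) : Prop :=
  (∀ x, 0 ≤ π x) ∧ ∑ x, π x = 1

/-- Cascade composition of channels (matrix product), outputs of the first ranging
over the finite set `Ys`. -/
def Fcascade {X B Z : Type*} (Ys : Finset B) (C : X → B → ℝ) (D : B → Z → ℝ) :
    X → Z → ℝ :=
  fun x z => ∑ y ∈ Ys, C x y * D y z

/-- Mutual information (base-2), with `0`-probability terms taken to be `0`. -/
def FMI {X B : Type*} [Fintype X] (π : X → ℝ) (Ys : Finset B) (C : X → B → ℝ) : ℝ :=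
  ∑ x, ∑ y ∈ Ys, if π x * C x y = 0 then 0
    else π x * C x y * Real.logb 2 (C x y / ∑ x', π x' * C x' y)

/-- Prior vulnerability. -/
def Vprior {X : Type*} [Fintype X] [Nonempty X] (π : X → ℝ) : ℝ :=
  Finset.univ.sup' Finset.univ_nonempty π

/-- Posterior vulnerability. -/
def FVpost {X B : Type*} [Fintype X] [Nonempty X]
    (π : X → ℝ) (Ys : Finset B) (C : X → B → ℝ) : ℝ :=
  ∑ y ∈ Ys, Finset.univ.sup' Finset.univ_nonempty (fun x => π x * C x y)

/-- Min-entropy leakage. -/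
def FMEL {X B : Type*} [Fintype X] [Nonempty X]
    (π : X → ℝ) (Ys : Finset B) (C : X → B → ℝ) : ℝ :=
  Real.logb 2 (FVpost π Ys C) - Real.logb 2 (Vprior π)

/-- Min-capacity: supremum of min-entropy leakage over all priors. -/
def FMinCap {X B : Type*} [Fintype X] [Nonempty X] (Ys : Finset B) (C : X → B → ℝ) : ℝ :=
  sSup {l : ℝ | ∃ π : X → ℝ, IsPrior π ∧ l = FMEL π Ys C}

/-- All interleavings (shuffles) of two traces. -/
def interleavings {A : Type*} : List A → List A → List (List A)
  | [], ys => [ys]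
  | x :: xs, [] => [x :: xs]
  | x :: xs, y :: ys =>
      ((interleavings xs (y :: ys)).map (x :: ·)) ++
        ((interleavings (x :: xs) ys).map (y :: ·))
termination_by l₁ l₂ => l₁.length + l₂.length

/-- The interleaving `Int(y₁, y₂)` of two traces, as a finite set. -/
def IntF {A : Type*} [DecidableEq A] (y₁ y₂ : List A) : Finset (List A) :=
  (interleavings y₁ y₂).toFinset

/-- The interleaving `Int(Y₁, Y₂)` of two finite sets of traces. -/
def IntSet {A : Type*} [DecidableEq A] (Y₁ Y₂ : Finset (List A)) : Finset (List A) :=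
  Y₁.biUnion fun y₁ => Y₂.biUnion fun y₂ => IntF y₁ y₂

/-- A scheduler on `Y₁`, `Y₂`: for each pair of traces it yields a probability
distribution supported on their interleavings. -/
def IsScheduler {A : Type*} [DecidableEq A] (Y₁ Y₂ : Finset (List A))
    (S : List A → List A → List A → ℝ) : Prop :=
  ∀ y₁ ∈ Y₁, ∀ y₂ ∈ Y₂,
    (∀ y, 0 ≤ S y₁ y₂ y) ∧ (∀ y, y ∉ IntF y₁ y₂ → S y₁ y₂ y = 0) ∧
      ∑ y ∈ IntF y₁ y₂, S y₁ y₂ y = 1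

/-- The scheduled composition of two channels with respect to a scheduler. -/
def Comp {A X₁ X₂ : Type*} (Y₁ Y₂ : Finset (List A))
    (C₁ : X₁ → List A → ℝ) (C₂ : X₂ → List A → ℝ)
    (S : List A → List A → List A → ℝ) : X₁ × X₂ → List A → ℝ :=
  fun x y => ∑ y₁ ∈ Y₁, ∑ y₂ ∈ Y₂, C₁ x.1 y₁ * C₂ x.2 y₂ * S y₁ y₂ y

/-- The (disjoint) parallel composition of two channels. -/
def Par {A X₁ X₂ : Type*} (C₁ : X₁ → List A → ℝ) (C₂ : X₂ → List A → ℝ) :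
    X₁ × X₂ → List A × List A → ℝ :=
  fun x y => C₁ x.1 y.1 * C₂ x.2 y.2

/-- A `∼`-blind scheduler: two pairs of component traces are componentwise
`∼`-equivalent iff the scheduled output distributions are
`∼`-indistinguishable. -/
def SimBlind {A : Type*} [DecidableEq A] (r : List A → List A → Prop)
    (Y₁ Y₂ : Finset (List A)) (S : List A → List A → List A → ℝ) : Prop :=
  ∀ y₁ ∈ Y₁, ∀ y₂ ∈ Y₂, ∀ y₁' ∈ Y₁, ∀ y₂' ∈ Y₂,
    ((r y₁ y₁' ∧ r y₂ y₂') ↔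
      ∀ t : List A,
        ∑ y ∈ (IntSet Y₁ Y₂).filter (fun y => r y t), S y₁ y₂ y =
          ∑ y ∈ (IntSet Y₁ Y₂).filter (fun y => r y t), S y₁' y₂' y)

/-- The deterministic `∼`-observer on traces, with views the `∼`-classes. -/
def detObs {A : Type*} (s : Setoid (List A)) : List A → Quotient s → ℝ :=
  fun y z => if z = Quotient.mk s y then 1 else 0

/-- The deterministic observer on pairs of traces mapping each pair to its pair
of `∼`-classes. -/
def detObsPair {A : Type*} (s : Setoid (List A)) :
    List A × List A → Quotient s × Quotient s → ℝ :=
  fun p q => if q = (Quotient.mk s p.1, Quotient.mk s p.2) then 1 else 0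

open Finset
open Real (log logb log_div log_nonneg one_sub_inv_le_log_of_pos)

-- No case split at `n q = 0` is needed since that term vanishes anyway; but `n q / 0 = 0`, so
-- the inequalities below assume `p q = 0 → n q = 0`.
def relEntropy {Q : Type*} (Qs : Finset Q) (n p : Q → ℝ) : ℝ :=
  ∑ q ∈ Qs, n q * logb 2 (n q / p q)

lemma mul_log_add_sub_le_mul_log_div {a b c : ℝ} (ha : 0 ≤ a) (hb : 0 ≤ b)
    (hab : b = 0 → a = 0) (hc : 0 < c) : a * log c + (a - b * c) ≤ a * log (a / b) := by
  rcases ha.eq_or_lt with rfl | ha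
  · simpa using mul_nonneg hb hc.le
  have hb : 0 < b := hb.lt_of_ne fun h => ha.ne' (hab h.symm)
  calc a * log c + (a - b * c) = a * (log c + (1 - (a / b / c)⁻¹)) := by field_simp
    _ ≤ a * (log c + log (a / b / c)) := by
        gcongr
        exact one_sub_inv_le_log_of_pos (by positivity)
    _ = a * log (a / b) := by rw [log_div (by positivity) hc.ne']; ring

theorem sum_mul_log_div_sum_le {ι : Type*} (t : Finset ι) (a b : ι → ℝ)
    (ha : ∀ i ∈ t, 0 ≤ a i) (hb : ∀ i ∈ t, 0 ≤ b i) (hab : ∀ i ∈ t, b i = 0 → a i = 0) :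
    (∑ i ∈ t, a i) * log ((∑ i ∈ t, a i) / ∑ i ∈ t, b i) ≤
      ∑ i ∈ t, a i * log (a i / b i) := by
  rcases (sum_nonneg ha).eq_or_lt with hA | hA
  · have ha0 : ∀ i ∈ t, a i = 0 := (sum_eq_zero_iff_of_nonneg ha).mp hA.symm
    rw [← hA, zero_mul]
    exact (sum_eq_zero fun i hi => by rw [ha0 i hi, zero_mul]).ge
  have hB : 0 < ∑ i ∈ t, b i := by
    refine (sum_nonneg hb).lt_of_ne fun hB => hA.ne' ?_
    exact sum_eq_zero fun i hi => hab i hi ((sum_eq_zero_iff_of_nonneg hb).mp hB.symm i hi)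
  calc (∑ i ∈ t, a i) * log ((∑ i ∈ t, a i) / ∑ i ∈ t, b i)
      = ∑ i ∈ t, (a i * log ((∑ i ∈ t, a i) / ∑ i ∈ t, b i)
          + (a i - b i * ((∑ i ∈ t, a i) / ∑ i ∈ t, b i))) := by
        rw [sum_add_distrib, sum_sub_distrib, ← sum_mul, ← sum_mul, mul_div_cancel₀ _ hB.ne']
        ring
    _ ≤ ∑ i ∈ t, a i * log (a i / b i) := sum_le_sum fun i hi =>
        mul_log_add_sub_le_mul_log_div (ha i hi) (hb i hi) (hab i hi) (div_pos hA hB)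

theorem sum_mul_logb_div_sum_le_relEntropy {ι : Type*} (t : Finset ι) (a b : ι → ℝ)
    (ha : ∀ i ∈ t, 0 ≤ a i) (hb : ∀ i ∈ t, 0 ≤ b i) (hab : ∀ i ∈ t, b i = 0 → a i = 0) :
    (∑ i ∈ t, a i) * logb 2 ((∑ i ∈ t, a i) / ∑ i ∈ t, b i) ≤ relEntropy t a b := by
  simp only [relEntropy, logb, ← mul_div_assoc, ← sum_div]
  exact div_le_div_of_nonneg_right (sum_mul_log_div_sum_le t a b ha hb hab)
    (log_nonneg one_le_two)

theorem relEntropy_cascade_le {Q Z : Type*} (Qs : Finset Q) (Zs : Finset Z) (n p : Q → ℝ)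
    (K : Q → Z → ℝ) (hn : ∀ q ∈ Qs, 0 ≤ n q) (hp : ∀ q ∈ Qs, 0 ≤ p q)
    (hnp : ∀ q ∈ Qs, p q = 0 → n q = 0) (hK0 : ∀ q ∈ Qs, ∀ z, 0 ≤ K q z)
    (hK1 : ∀ q ∈ Qs, ∑ z ∈ Zs, K q z = 1) :
    relEntropy Zs (fun z => ∑ q ∈ Qs, n q * K q z) (fun z => ∑ q ∈ Qs, p q * K q z) ≤
      relEntropy Qs n p := by
  have hcancel : ∀ q z, n q * K q z * logb 2 (n q * K q z / (p q * K q z)) =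
      K q z * (n q * logb 2 (n q / p q)) := fun q z => by
    rcases eq_or_ne (K q z) 0 with hK | hK
    · simp [hK]
    · rw [mul_div_mul_right _ _ hK]; ring
  calc relEntropy Zs (fun z => ∑ q ∈ Qs, n q * K q z) (fun z => ∑ q ∈ Qs, p q * K q z)
      ≤ ∑ z ∈ Zs, relEntropy Qs (fun q => n q * K q z) (fun q => p q * K q z) :=
        sum_le_sum fun z _ => sum_mul_logb_div_sum_le_relEntropy Qs _ _
          (fun q hq => mul_nonneg (hn q hq) (hK0 q hq z))
          (fun q hq => mul_nonneg (hp q hq) (hK0 q hq z))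
          (fun q hq h => by rcases mul_eq_zero.mp h with h | h <;> simp [h, hnp q hq])
    _ = relEntropy Qs n p := by
        simp only [relEntropy, hcancel]
        rw [sum_comm]
        exact sum_congr rfl fun q hq => by rw [← sum_mul, hK1 q hq, one_mul]

lemma FMI_eq_sum_mul_relEntropy {X B : Type*} [Fintype X] (π : X → ℝ) (Ys : Finset B)
    (C : X → B → ℝ) :
    FMI π Ys C = ∑ x, π x * relEntropy Ys (C x) (fun y => ∑ x', π x' * C x' y) := by
  refine sum_congr rfl fun x _ => ?_
  rw [relEntropy, mul_sum]
  refine sum_congr rfl fun y _ => ?_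
  split_ifs with h
  · rw [← mul_assoc, h, zero_mul]
  · ring

lemma Fcascade_assoc {X B C' Z : Type*} (Xs : Finset B) (Ys : Finset C') (C : X → B → ℝ)
    (D : B → C' → ℝ) (E : C' → Z → ℝ) :
    Fcascade Ys (Fcascade Xs C D) E = Fcascade Xs C (Fcascade Ys D E) := by
  funext x z
  simp only [Fcascade, sum_mul, mul_sum, mul_assoc]
  exact sum_comm

theorem FMI_cascade_le {X Q Z : Type*} [Fintype X] (π : X → ℝ) (hπ : ∀ x, 0 ≤ π x)
    (Qs : Finset Q) (Zs : Finset Z) (N : X → Q → ℝ) (hN : ∀ x, ∀ q ∈ Qs, 0 ≤ N x q)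
    (K : Q → Z → ℝ) (hK0 : ∀ q ∈ Qs, ∀ z, 0 ≤ K q z) (hK1 : ∀ q ∈ Qs, ∑ z ∈ Zs, K q z = 1) :
    FMI π Zs (Fcascade Qs N K) ≤ FMI π Qs N := by
  rw [FMI_eq_sum_mul_relEntropy, FMI_eq_sum_mul_relEntropy]
  refine sum_le_sum fun x _ => ?_
  rcases (hπ x).eq_or_lt with hx | hx
  · simp [← hx]
  have houtput : (fun z => ∑ x', π x' * Fcascade Qs N K x' z) =
      fun z => ∑ q ∈ Qs, (∑ x', π x' * N x' q) * K q z := by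
    funext z
    simp only [Fcascade, mul_sum, sum_mul, mul_assoc]
    exact sum_comm
  rw [houtput]
  refine mul_le_mul_of_nonneg_left ?_ hx.le
  refine relEntropy_cascade_le Qs Zs (N x) _ K (hN x)
    (fun q hq => sum_nonneg fun x' _ => mul_nonneg (hπ x') (hN x' q hq)) (fun q hq hq0 => ?_)
    hK0 hK1
  have hle : π x * N x q ≤ 0 :=
    hq0 ▸ single_le_sum (fun x' _ => mul_nonneg (hπ x') (hN x' q hq)) (mem_univ x)
  exact le_antisymm (nonpos_of_mul_nonpos_right hle hx) (hN x q hq)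

theorem FMI_cascade_le_of_factor {X B Q Z : Type*} [Fintype X] [DecidableEq Q]
    (π : X → ℝ) (hπ : ∀ x, 0 ≤ π x) (Ys : Finset B) (C : X → B → ℝ) (hC : ∀ x, ∀ b ∈ Ys, 0 ≤ C x b)
    (f : B → Q) (Zs : Finset Z) (D : B → Z → ℝ) (hD0 : ∀ b ∈ Ys, ∀ z, 0 ≤ D b z)
    (hD1 : ∀ b ∈ Ys, ∑ z ∈ Zs, D b z = 1)
    (hDf : ∀ b ∈ Ys, ∀ b' ∈ Ys, f b = f b' → D b = D b') :
    FMI π Zs (Fcascade Ys C D) ≤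
      FMI π (Ys.image f) (Fcascade Ys C fun b q => if q = f b then 1 else 0) := by
  set K : Q → Z → ℝ := fun q => if h : ∃ b ∈ Ys, f b = q then D h.choose else 0
  have hK : ∀ b ∈ Ys, K (f b) = D b := fun b hb => by
    have h : ∃ b' ∈ Ys, f b' = f b := ⟨b, hb, rfl⟩
    simp only [K, dif_pos h]
    exact hDf _ h.choose_spec.1 b hb h.choose_spec.2
  have hfactor : Fcascade Ys C D =
      Fcascade (Ys.image f) (Fcascade Ys C fun b q => if q = f b then 1 else 0) K := by
    rw [Fcascade_assoc]
    funext x z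
    refine sum_congr rfl fun b hb => ?_
    simp only [Fcascade, ite_mul, one_mul, zero_mul, sum_ite_eq', mem_image_of_mem f hb,
      if_true, hK b hb]
  rw [hfactor]
  refine FMI_cascade_le π hπ _ Zs _ (fun x q _ => sum_nonneg fun b hb => ?_) K ?_ ?_
  · exact mul_nonneg (hC x b hb) (ite_nonneg zero_le_one le_rfl)
  · intro q hq
    obtain ⟨b, hb, rfl⟩ := mem_image.mp hq
    rw [hK b hb]
    exact hD0 b hb
  · intro q hq
    obtain ⟨b, hb, rfl⟩ := mem_image.mp hq
    rw [hK b hb]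
    exact hD1 b hb

lemma Comp_eq_Fcascade_Par {A X₁ X₂ : Type*} (Y₁ Y₂ : Finset (List A))
    (C₁ : X₁ → List A → ℝ) (C₂ : X₂ → List A → ℝ) (S : List A → List A → List A → ℝ) :
    Comp Y₁ Y₂ C₁ C₂ S = Fcascade (Y₁ ×ˢ Y₂) (Par C₁ C₂) fun p => S p.1 p.2 := by
  funext x y
  rw [Comp, Fcascade, sum_product]
  rfl

lemma Fcascade_detObs_apply {X A : Type*} (s : Setoid (List A)) (Ys : Finset (List A))
    (D : X → List A → ℝ) (x : X) (z : Quotient s) :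
    Fcascade Ys D (detObs s) x z = ∑ y ∈ Ys with Quotient.mk s y = z, D x y := by
  simp [Fcascade, detObs, sum_filter, eq_comm]

lemma sum_Fcascade_detObs {X A : Type*} (s : Setoid (List A)) (Ys : Finset (List A))
    (D : X → List A → ℝ) (x : X) :
    ∑ z ∈ Ys.image (Quotient.mk s), Fcascade Ys D (detObs s) x z = ∑ y ∈ Ys, D x y := by
  simp only [Fcascade_detObs_apply]
  exact sum_fiberwise_of_maps_to (fun y hy => mem_image_of_mem _ hy) _

lemma IntF_subset_IntSet {A : Type*} [DecidableEq A] {Y₁ Y₂ : Finset (List A)}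
    {y₁ y₂ : List A} (h₁ : y₁ ∈ Y₁) (h₂ : y₂ ∈ Y₂) : IntF y₁ y₂ ⊆ IntSet Y₁ Y₂ :=
  fun _ hy => mem_biUnion.mpr ⟨y₁, h₁, mem_biUnion.mpr ⟨y₂, h₂, hy⟩⟩

lemma IsScheduler.sum_IntSet_eq_one {A : Type*} [DecidableEq A] {Y₁ Y₂ : Finset (List A)}
    {S : List A → List A → List A → ℝ} (hS : IsScheduler Y₁ Y₂ S) {y₁ y₂ : List A}
    (h₁ : y₁ ∈ Y₁) (h₂ : y₂ ∈ Y₂) : ∑ y ∈ IntSet Y₁ Y₂, S y₁ y₂ y = 1 := by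
  obtain ⟨-, hzero, hsum⟩ := hS y₁ h₁ y₂ h₂
  rw [← hsum]
  exact (sum_subset (IntF_subset_IntSet h₁ h₂) fun y _ hy => hzero y hy).symm

lemma SimBlind.Fcascade_detObs_eq {A : Type*} [DecidableEq A] {s : Setoid (List A)}
    {Y₁ Y₂ : Finset (List A)} {S : List A → List A → List A → ℝ}
    (hblind : SimBlind (fun a b => s.r a b) Y₁ Y₂ S) {p p' : List A × List A}
    (hp : p ∈ Y₁ ×ˢ Y₂) (hp' : p' ∈ Y₁ ×ˢ Y₂) (h₁ : s.r p.1 p'.1) (h₂ : s.r p.2 p'.2) :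
    Fcascade (IntSet Y₁ Y₂) (fun p => S p.1 p.2) (detObs s) p =
      Fcascade (IntSet Y₁ Y₂) (fun p => S p.1 p.2) (detObs s) p' := by
  funext z
  induction z using Quotient.inductionOn with
  | h t =>
    rw [mem_product] at hp hp'
    simp only [Fcascade_detObs_apply, Quotient.eq]
    exact (hblind _ hp.1 _ hp.2 _ hp'.1 _ hp'.2).mp ⟨h₁, h₂⟩ t

/-- under a `∼`-blind scheduler, the observed mutual information
of the scheduled composition (under the deterministic `∼`-observer) is at most
that of the parallel composition (under the componentwise `∼`-class observer). -/
theorem blind_scheduler_observed_MI_le_parallel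
    {A X₁ X₂ : Type*} [DecidableEq A] [Fintype X₁] [Fintype X₂]
    (s : Setoid (List A))
    (Y₁ Y₂ : Finset (List A))
    (C₁ : X₁ → List A → ℝ) (C₂ : X₂ → List A → ℝ)
    (hC₁ : FIsChannel Y₁ C₁) (hC₂ : FIsChannel Y₂ C₂)
    (π : X₁ × X₂ → ℝ) (hπ : IsPrior π)
    (S : List A → List A → List A → ℝ) (hS : IsScheduler Y₁ Y₂ S)
    (hblind : SimBlind (fun a b => s.r a b) Y₁ Y₂ S) :
    FMI π ((IntSet Y₁ Y₂).image (Quotient.mk s))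
        (Fcascade (IntSet Y₁ Y₂) (Comp Y₁ Y₂ C₁ C₂ S) (detObs s)) ≤
      FMI π ((Y₁ ×ˢ Y₂).image (fun p => (Quotient.mk s p.1, Quotient.mk s p.2)))
        (Fcascade (Y₁ ×ˢ Y₂) (Par C₁ C₂) (detObsPair s)) := by
  rw [Comp_eq_Fcascade_Par, Fcascade_assoc]
  refine FMI_cascade_le_of_factor π hπ.1 (Y₁ ×ˢ Y₂) (Par C₁ C₂)
    (fun x p _ => mul_nonneg (hC₁.1 _ _) (hC₂.1 _ _))
    (fun p => (Quotient.mk s p.1, Quotient.mk s p.2)) _ _ ?_ ?_ ?_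
  · intro p hp z
    obtain ⟨h₁, h₂⟩ := mem_product.mp hp
    rw [Fcascade_detObs_apply]
    exact sum_nonneg fun y _ => (hS p.1 h₁ p.2 h₂).1 y
  · intro p hp
    obtain ⟨h₁, h₂⟩ := mem_product.mp hp
    rw [sum_Fcascade_detObs]
    exact hS.sum_IntSet_eq_one h₁ h₂
  · intro p hp p' hp' hf
    obtain ⟨h₁, h₂⟩ := Prod.mk.inj hf
    exact hblind.Fcascade_detObs_eq hp hp' (Quotient.exact h₁) (Quotient.exact h₂)
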